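/- Let A ∈ ℍ^{n×n}. The function P : ℝ⁴ → ℝ given by P(λ_r, λ_i, λ_j, λ_k) = det(ρ(A) − Iₙ ⊗ L(λ)), where λ = λ_r + λ_i i + λ_j j + λ_k k, is a real polynomial in the four variables (λ_r, λ_i, λ_j, λ_k) of total degree at most 4n; moreover λ is a left eigenvalue of A if and only if P(λ_r, λ_i, λ_j, λ_k) = 0. -/
import Mathlib


open Quaternion Matrix Kronecker

/-- `λ` is a left eigenvalue of `A`: `A x = λ x` for some nonzero `x`. -/
def IsLeftEigenvalue {n : ℕ} (A : Matrix (Fin n) (Fin n) ℍ[ℝ]) (l : ℍ[ℝ]) : Prop :=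
  ∃ x : Fin n → ℍ[ℝ], x ≠ 0 ∧ A.mulVec x = fun k => l * x k

/-- The `4 × 4` real matrix of left multiplication by the quaternion `q`. -/
noncomputable def Lmat (q : ℍ[ℝ]) : Matrix (Fin 4) (Fin 4) ℝ :=
  !![q.re,  -q.imI, -q.imJ, -q.imK;
     q.imI,  q.re,  -q.imK,  q.imJ;
     q.imJ,  q.imK,  q.re,  -q.imI;
     q.imK, -q.imJ,  q.imI,  q.re]

/-- The real embedding `ρ : ℍ^{n×n} → ℝ^{4n×4n}` whose `(r,s)` block is `L(a_{rs})`. -/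
noncomputable def rho {n : ℕ} (A : Matrix (Fin n) (Fin n) ℍ[ℝ]) :
    Matrix (Fin n × Fin 4) (Fin n × Fin 4) ℝ :=
  fun p q => Lmat (A p.1 q.1) p.2 q.2

open MvPolynomial

/-- The coordinate map of a quaternion, as an additive hom. -/
noncomputable def q2r1 : ℍ[ℝ] →+ (Fin 4 → ℝ) where
  toFun q := ![q.re, q.imI, q.imJ, q.imK]
  map_zero' := by funext i; fin_cases i <;> simp
  map_add' a b := by funext i; fin_cases i <;> simp

lemma Lmat_mulVec (q p : ℍ[ℝ]) : (Lmat q).mulVec (q2r1 p) = q2r1 (q * p) := by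
  funext i
  fin_cases i <;>
    simp [Lmat, q2r1, mulVec, dotProduct, Fin.sum_univ_four, Quaternion.re_mul,
      Quaternion.imI_mul, Quaternion.imJ_mul, Quaternion.imK_mul] <;> ring

/-- The real coordinate vector of a quaternion vector. -/
noncomputable def q2r {n : ℕ} : (Fin n → ℍ[ℝ]) →+ (Fin n × Fin 4 → ℝ) where
  toFun x := fun p => q2r1 (x p.1) p.2
  map_zero' := by funext p; simp
  map_add' a b := by funext p; simp

lemma q2r_eq_zero_iff {n : ℕ} (x : Fin n → ℍ[ℝ]) : q2r x = 0 ↔ x = 0 := by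
  constructor
  · intro h
    funext r
    have h0 := congrFun h (r, 0)
    have h1 := congrFun h (r, 1)
    have h2 := congrFun h (r, 2)
    have h3 := congrFun h (r, 3)
    simp [q2r, q2r1] at h0 h1 h2 h3
    ext <;> simpa
  · rintro rfl; simp

lemma rho_mulVec {n : ℕ} (A : Matrix (Fin n) (Fin n) ℍ[ℝ]) (x : Fin n → ℍ[ℝ]) :
    (rho A).mulVec (q2r x) = q2r (A.mulVec x) := by
  funext p
  obtain ⟨r, i⟩ := p
  have key : ∀ s, ∑ j, Lmat (A r s) i j * q2r1 (x s) j = q2r1 (A r s * x s) i := by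
    intro s
    have := congrFun (Lmat_mulVec (A r s) (x s)) i
    simpa [mulVec, dotProduct] using this
  calc ((rho A).mulVec (q2r x)) (r, i)
      = ∑ s, ∑ j, Lmat (A r s) i j * q2r1 (x s) j := by
        simp [mulVec, dotProduct, rho, q2r, Fintype.sum_prod_type]
    _ = ∑ s, q2r1 (A r s * x s) i := by simp_rw [key]
    _ = q2r1 (∑ s, A r s * x s) i := by
        rw [map_sum q2r1]; simp
    _ = q2r (A.mulVec x) (r, i) := by simp [q2r, mulVec, dotProduct]

lemma kron_mulVec {n : ℕ} (l : ℍ[ℝ]) (x : Fin n → ℍ[ℝ]) :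
    (((1 : Matrix (Fin n) (Fin n) ℝ) ⊗ₖ Lmat l)).mulVec (q2r x) =
      q2r (fun k => l * x k) := by
  funext p
  obtain ⟨r, i⟩ := p
  have key := congrFun (Lmat_mulVec l (x r)) i
  calc (((1 : Matrix (Fin n) (Fin n) ℝ) ⊗ₖ Lmat l)).mulVec (q2r x) (r, i)
      = ∑ s, ∑ j, (if r = s then (1:ℝ) else 0) * Lmat l i j * q2r1 (x s) j := by
        simp [mulVec, dotProduct, kroneckerMap_apply, q2r, Fintype.sum_prod_type,
          Matrix.one_apply]
    _ = ∑ j, Lmat l i j * q2r1 (x r) j := by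
        rw [Finset.sum_eq_single r]
        · simp
        · intro s _ hs; simp [Ne.symm hs]
        · simp
    _ = q2r1 (l * x r) i := by simpa [mulVec, dotProduct] using key
    _ = _ := rfl

/-- `λ` is a left eigenvalue iff the real matrix `ρ(A) − Iₙ ⊗ L(λ)` is singular. -/
lemma eig_iff_det {n : ℕ} (A : Matrix (Fin n) (Fin n) ℍ[ℝ]) (l : ℍ[ℝ]) :
    (∃ x : Fin n → ℍ[ℝ], x ≠ 0 ∧ A.mulVec x = fun k => l * x k) ↔
      (rho A - (1 : Matrix (Fin n) (Fin n) ℝ) ⊗ₖ Lmat l).det = 0 := by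
  rw [← Matrix.exists_mulVec_eq_zero_iff]
  constructor
  · rintro ⟨x, hx, hAx⟩
    refine ⟨q2r x, by simpa [q2r_eq_zero_iff] using hx, ?_⟩
    rw [Matrix.sub_mulVec, rho_mulVec, kron_mulVec, hAx, sub_self]
  · rintro ⟨w, hw, hBw⟩
    set x : Fin n → ℍ[ℝ] := fun r => ⟨w (r,0), w (r,1), w (r,2), w (r,3)⟩ with hxdef
    have hqx : q2r x = w := by
      funext p
      obtain ⟨r, i⟩ := p
      fin_cases i <;> rfl
    refine ⟨x, ?_, ?_⟩
    · intro h0; apply hw; rw [← hqx, h0]; simp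
    · have hz : q2r (A.mulVec x) - q2r (fun k => l * x k) = 0 := by
        rw [← rho_mulVec, ← kron_mulVec, ← Matrix.sub_mulVec, hqx, hBw]
      have heq := sub_eq_zero.mp hz
      funext r
      have h0 := congrFun heq (r, 0)
      have h1 := congrFun heq (r, 1)
      have h2 := congrFun heq (r, 2)
      have h3 := congrFun heq (r, 3)
      simp only [q2r, q2r1, AddMonoidHom.coe_mk, ZeroHom.coe_mk, Matrix.cons_val_zero,
        Matrix.cons_val_one, Matrix.head_cons, Matrix.cons_val_two, Matrix.tail_cons,
        Matrix.cons_val_three] at h0 h1 h2 h3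
      ext <;> assumption

/-- The polynomial version of `L(λ)`. -/
noncomputable def LmatX : Matrix (Fin 4) (Fin 4) (MvPolynomial (Fin 4) ℝ) :=
  !![X 0, -X 1, -X 2, -X 3;
     X 1,  X 0, -X 3,  X 2;
     X 2,  X 3,  X 0, -X 1;
     X 3, -X 2,  X 1,  X 0]

/-- The matrix of polynomials whose determinant is the elimination polynomial. -/
noncomputable def Mpoly {n : ℕ} (A : Matrix (Fin n) (Fin n) ℍ[ℝ]) :
    Matrix (Fin n × Fin 4) (Fin n × Fin 4) (MvPolynomial (Fin 4) ℝ) :=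
  fun p q => C (rho A p q) - (if p.1 = q.1 then LmatX p.2 q.2 else 0)

lemma LmatX_deg (i j : Fin 4) : (LmatX i j).totalDegree ≤ 1 := by
  fin_cases i <;> fin_cases j <;>
    simp [LmatX, totalDegree_X, totalDegree_neg]

lemma Mpoly_deg {n : ℕ} (A : Matrix (Fin n) (Fin n) ℍ[ℝ]) (p q : Fin n × Fin 4) :
    (Mpoly A p q).totalDegree ≤ 1 := by
  unfold Mpoly
  rw [sub_eq_add_neg]
  refine (totalDegree_add _ _).trans (max_le (by simp [totalDegree_C]) ?_)
  rw [totalDegree_neg]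
  split
  · exact LmatX_deg _ _
  · simp

lemma Mpoly_det_deg {n : ℕ} (A : Matrix (Fin n) (Fin n) ℍ[ℝ]) :
    (Mpoly A).det.totalDegree ≤ 4 * n := by
  rw [Matrix.det_apply]
  refine (totalDegree_finset_sum _ _).trans (Finset.sup_le fun σ _ => ?_)
  refine (totalDegree_smul_le _ _).trans ?_
  refine (totalDegree_finset_prod _ _).trans ?_
  calc ∑ p, (Mpoly A (σ p) p).totalDegree ≤ ∑ _p : Fin n × Fin 4, 1 :=
        Finset.sum_le_sum fun p _ => Mpoly_deg A (σ p) p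
    _ = 4 * n := by simp [mul_comm]

lemma eval_LmatX (lr li lj lk : ℝ) (i j : Fin 4) :
    eval ![lr, li, lj, lk] (LmatX i j) = Lmat (⟨lr, li, lj, lk⟩ : ℍ[ℝ]) i j := by
  fin_cases i <;> fin_cases j <;> simp [LmatX, Lmat]

lemma eval_Mpoly_det {n : ℕ} (A : Matrix (Fin n) (Fin n) ℍ[ℝ]) (lr li lj lk : ℝ) :
    eval ![lr, li, lj, lk] (Mpoly A).det =
      (rho A - (1 : Matrix (Fin n) (Fin n) ℝ) ⊗ₖ Lmat (⟨lr, li, lj, lk⟩ : ℍ[ℝ])).det := by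
  rw [RingHom.map_det]
  congr 1
  ext p q
  obtain ⟨r, i⟩ := p
  obtain ⟨s, j⟩ := q
  by_cases h : r = s <;>
    simp [Mpoly, h, eval_LmatX, Matrix.one_apply]

/-- The function `(λ_r, λ_i, λ_j, λ_k) ↦ det(ρ(A) − Iₙ ⊗ L(λ))` is given by a real
polynomial `P` in four variables of total degree at most `4n`, and `λ` is a left
eigenvalue of `A` iff `P(λ_r, λ_i, λ_j, λ_k) = 0`. -/
theorem det_elimination_polynomial (n : ℕ) (A : Matrix (Fin n) (Fin n) ℍ[ℝ]) :
    ∃ P : MvPolynomial (Fin 4) ℝ,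
      P.totalDegree ≤ 4 * n ∧
      (∀ lr li lj lk : ℝ,
        MvPolynomial.eval ![lr, li, lj, lk] P =
          (rho A - (1 : Matrix (Fin n) (Fin n) ℝ) ⊗ₖ
            Lmat (⟨lr, li, lj, lk⟩ : ℍ[ℝ])).det) ∧
      (∀ l : ℍ[ℝ], IsLeftEigenvalue A l ↔
        MvPolynomial.eval ![l.re, l.imI, l.imJ, l.imK] P = 0) := by
  refine ⟨(Mpoly A).det, Mpoly_det_deg A, eval_Mpoly_det A, fun l => ?_⟩
  have hl : (⟨l.re, l.imI, l.imJ, l.imK⟩ : ℍ[ℝ]) = l := rfl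
  rw [eval_Mpoly_det A l.re l.imI l.imJ l.imK, hl]
  exact eig_iff_det A l
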